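/- arXiv:1212.2839 — 7 statements merged into one kernel-verified Lean document; each statement's English description precedes it below -/
import Mathlib

section
/- For U = R S + L S† + M a unitary operator on ℓ²(ℤ) ⊗ ℂ^Λ, where S is the shift operator and R, L, M are Λ×Λ matrices, unitarity of U is equivalent to the conditions R R† + L L† + M M† = I, M R† + L M† = 0, and L R† = 0. -/
/-!
Products of nearest-neighbour operators on `ℓ²(ℤ, E)` are five-band operators, and testing on
vectors supported at one site shows that a five-band operator is the identity exactly when its
diagonal coefficient is `1` and the others vanish. Hence `U U⋆ = 1` is equivalent to the three
stated identities for `(R, L, M)`, and `U⋆ U = 1` to the same identities for `(L⋆, R⋆, M⋆)`.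
These two sets of identities say that the symbol `W z = z R + M + z̄ L` satisfies `W W⋆ = 1`,
resp. `W⋆ W = 1`, on the unit circle (a trigonometric polynomial vanishing on the circle has
zero coefficients), so they are equivalent for square matrices, where one-sided inverses are
two-sided.
-/

open scoped InnerProductSpace

open Polynomial in
theorem Complex.eq_zero_of_trigPoly_vanishes_on_circle {a b c d e : ℂ}
    (h : ∀ z : ℂ, ‖z‖ = 1 → a + z * b + star z * c + z ^ 2 * d + star z ^ 2 * e = 0) :
    a = 0 ∧ b = 0 ∧ c = 0 ∧ d = 0 ∧ e = 0 := by
  set p : ℂ[X] := C e + C c * X + C a * X ^ 2 + C b * X ^ 3 + C d * X ^ 4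
  have hroot : ∀ z : ℂ, ‖z‖ = 1 → p.IsRoot z := by
    intro z hz
    have hz₁ : star z * z = 1 := by simpa [hz] using Complex.conj_mul' z
    -- on the circle `star z = z⁻¹`, so `p z` is `z ^ 2` times the left-hand side of `h`
    simp only [p, IsRoot, eval_add, eval_mul, eval_C, eval_X, eval_pow]
    linear_combination z ^ 2 * h z hz - (e * (star z * z + 1) + c * z) * hz₁
  have hcircle : (Metric.sphere (0 : ℂ) 1).Infinite :=
    (isPreconnected_sphere (by rw [Complex.rank_real_complex]; norm_num) 0 1).infinite_of_nontrivial
      ⟨1, by simp, -1, by simp, by norm_num⟩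
  have hp : p = 0 := eq_zero_of_infinite_isRoot p
    (hcircle.mono fun z hz => hroot z (by simpa using hz))
  have hcoeff := fun n => congrArg (coeff · n) hp
  refine ⟨?_, ?_, ?_, ?_, ?_⟩
  · simpa [p, coeff_X, coeff_C, coeff_X_pow] using hcoeff 2
  · simpa [p, coeff_X, coeff_C, coeff_X_pow] using hcoeff 3
  · simpa [p, coeff_X, coeff_C, coeff_X_pow] using hcoeff 1
  · simpa [p, coeff_X, coeff_C, coeff_X_pow] using hcoeff 4
  · simpa [p, coeff_X, coeff_C, coeff_X_pow] using hcoeff 0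

theorem eq_zero_of_trigPoly_vanishes_on_circle {V : Type*} [AddCommGroup V] [Module ℂ V]
    {a b c d e : V}
    (h : ∀ z : ℂ, ‖z‖ = 1 → a + z • b + star z • c + z ^ 2 • d + star z ^ 2 • e = 0) :
    a = 0 ∧ b = 0 ∧ c = 0 ∧ d = 0 ∧ e = 0 := by
  simp only [← Module.forall_dual_apply_eq_zero_iff ℂ (V := V), ← forall_and]
  intro φ
  refine Complex.eq_zero_of_trigPoly_vanishes_on_circle fun z hz => ?_
  simpa using congrArg φ (h z hz)

section Coeffs

variable {A : Type*} [Ring A] [StarRing A]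

/-- For a unitary `S` commuting with `r`, `l`, `m`, these identities say exactly that
`r S + l S⋆ + m` is a coisometry. -/
def CoisometryCoeffs (r l m : A) : Prop :=
  r * star r + l * star l + m * star m = 1 ∧ m * star r + l * star m = 0 ∧ l * star r = 0

theorem coisometryCoeffs_iff_fiveBand (r l m : A) :
    CoisometryCoeffs r l m ↔ r * star l = 0 ∧ r * star m + m * star l = 0 ∧
      r * star r + l * star l + m * star m = 1 ∧ l * star m + m * star r = 0 ∧ l * star r = 0 := by
  have h₁ : star (m * star r + l * star m) = r * star m + m * star l := by
    simp only [star_add, star_mul, star_star, add_comm]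
  have h₂ : star (l * star r) = r * star l := by simp only [star_mul, star_star]
  rw [CoisometryCoeffs, add_comm (l * star m), ← h₁, ← h₂, star_eq_zero, star_eq_zero]
  tauto

theorem coisometryCoeffs_map_iff {B F : Type*} [Ring B] [StarRing B] [FunLike F A B]
    [RingHomClass F A B] [StarHomClass F A B] {f : F} (hf : Function.Injective f) {r l m : A} :
    CoisometryCoeffs (f r) (f l) (f m) ↔ CoisometryCoeffs r l m := by
  simp only [CoisometryCoeffs, ← map_star, ← map_mul, ← map_add, ← map_one f, ← map_zero f,
    hf.eq_iff]

variable [Algebra ℂ A] [StarModule ℂ A]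

def nearestNeighbourSymbol (r l m : A) (z : ℂ) : A := z • r + m + star z • l

theorem star_nearestNeighbourSymbol (r l m : A) (z : ℂ) :
    star (nearestNeighbourSymbol r l m z) =
      nearestNeighbourSymbol (star l) (star r) (star m) z := by
  simp only [nearestNeighbourSymbol, star_add, star_smul, star_star]
  abel

theorem nearestNeighbourSymbol_mul_star (r l m : A) {z : ℂ} (hz : ‖z‖ = 1) :
    nearestNeighbourSymbol r l m z * star (nearestNeighbourSymbol r l m z) =
      (r * star r + l * star l + m * star m) + z • (r * star m + m * star l)
        + star z • (m * star r + l * star m) + z ^ 2 • (r * star l)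
        + star z ^ 2 • (l * star r) := by
  have hz₁ : star z * z = 1 := by simpa [hz] using Complex.conj_mul' z
  have hz₂ : z * star z = 1 := by rw [mul_comm, hz₁]
  simp only [nearestNeighbourSymbol, star_add, star_smul, star_star, add_mul, mul_add,
    mul_smul_comm, smul_mul_assoc]
  linear_combination (norm := module) hz₂ • (r * star r) + hz₁ • (l * star l)

theorem coisometryCoeffs_iff_symbol (r l m : A) :
    CoisometryCoeffs r l m ↔ ∀ z : ℂ, ‖z‖ = 1 →
      nearestNeighbourSymbol r l m z * star (nearestNeighbourSymbol r l m z) = 1 := by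
  rw [coisometryCoeffs_iff_fiveBand]
  constructor
  · rintro ⟨hrl, hrm, hsum, hlm, hlr⟩ z hz
    rw [nearestNeighbourSymbol_mul_star r l m hz, hsum, hrm, add_comm (m * star r), hlm, hrl, hlr]
    simp
  · intro h
    have hcoeffs : ∀ z : ℂ, ‖z‖ = 1 → (r * star r + l * star l + m * star m - 1)
        + z • (r * star m + m * star l) + star z • (m * star r + l * star m)
        + z ^ 2 • (r * star l) + star z ^ 2 • (l * star r) = 0 := fun z hz => by
      rw [← sub_eq_zero.mpr (h z hz), nearestNeighbourSymbol_mul_star r l m hz]; abel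
    obtain ⟨hsum, hrm, hlm, hrl, hlr⟩ := eq_zero_of_trigPoly_vanishes_on_circle hcoeffs
    exact ⟨hrl, hrm, sub_eq_zero.mp hsum, by rwa [add_comm], hlr⟩

end Coeffs

theorem Matrix.coisometryCoeffs_star_iff {n : Type*} [Fintype n] [DecidableEq n]
    {R L M : Matrix n n ℂ} :
    CoisometryCoeffs (star L) (star R) (star M) ↔ CoisometryCoeffs R L M := by
  simp only [coisometryCoeffs_iff_symbol, ← star_nearestNeighbourSymbol, star_star,
    mul_eq_one_comm]

section NearestNeighbour

variable {𝕜 E : Type*} [RCLike 𝕜] [NormedAddCommGroup E] [InnerProductSpace 𝕜 E]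

local notation "ℓ²(" E ")" => lp (fun _ : ℤ => E) 2

def IsNearestNeighbour (T : ℓ²(E) →L[𝕜] ℓ²(E)) (r l m : E →L[𝕜] E) : Prop :=
  ∀ ψ x, T ψ x = r (ψ (x + 1)) + l (ψ (x - 1)) + m (ψ x)

variable {T : ℓ²(E) →L[𝕜] ℓ²(E)} {r l m : E →L[𝕜] E}

theorem IsNearestNeighbour.apply_single (h : IsNearestNeighbour T r l m) (x : ℤ) (v : E) :
    T (lp.single 2 x v) =
      (lp.single 2 (x - 1) (r v) + lp.single 2 (x + 1) (l v) + lp.single 2 x (m v) : ℓ²(E)) := by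
  ext y : 2
  rw [h]
  simp only [lp.coeFn_add, Pi.add_apply, lp.single_apply, Pi.single_apply, ← eq_sub_iff_add_eq,
    sub_eq_iff_eq_add]
  split_ifs <;> simp

theorem eq_one_iff_of_fiveBand {T : ℓ²(E) →L[𝕜] ℓ²(E)} {a₂ a₁ a₀ b₁ b₂ : E →L[𝕜] E}
    (hT : ∀ ψ x, T ψ x =
      a₂ (ψ (x + 2)) + a₁ (ψ (x + 1)) + a₀ (ψ x) + b₁ (ψ (x - 1)) + b₂ (ψ (x - 2))) :
    T = 1 ↔ a₂ = 0 ∧ a₁ = 0 ∧ a₀ = 1 ∧ b₁ = 0 ∧ b₂ = 0 := by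
  constructor
  · rintro rfl
    refine ⟨?_, ?_, ?_, ?_, ?_⟩ <;> ext1 v
    · simpa [Pi.single_apply] using (hT (lp.single 2 0 v) (-2)).symm
    · simpa [Pi.single_apply] using (hT (lp.single 2 0 v) (-1)).symm
    · simpa [Pi.single_apply] using (hT (lp.single 2 0 v) 0).symm
    · simpa [Pi.single_apply] using (hT (lp.single 2 0 v) 1).symm
    · simpa [Pi.single_apply] using (hT (lp.single 2 0 v) 2).symm
  · rintro ⟨rfl, rfl, rfl, rfl, rfl⟩
    refine ContinuousLinearMap.ext fun ψ => lp.ext (funext fun x => ?_)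
    simp [hT]

theorem IsNearestNeighbour.mul_apply {T₁ T₂ : ℓ²(E) →L[𝕜] ℓ²(E)}
    {r₁ l₁ m₁ r₂ l₂ m₂ : E →L[𝕜] E} (h₁ : IsNearestNeighbour T₁ r₁ l₁ m₁)
    (h₂ : IsNearestNeighbour T₂ r₂ l₂ m₂) (ψ : ℓ²(E)) (x : ℤ) :
    (T₁ * T₂) ψ x = (r₁ * r₂) (ψ (x + 2)) + (r₁ * m₂ + m₁ * r₂) (ψ (x + 1))
      + (r₁ * l₂ + l₁ * r₂ + m₁ * m₂) (ψ x) + (l₁ * m₂ + m₁ * l₂) (ψ (x - 1))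
      + (l₁ * l₂) (ψ (x - 2)) := by
  rw [mul_apply_eq_comp, h₁, h₂, h₂, h₂, add_sub_cancel_right, sub_add_cancel,
    add_assoc x 1 1, sub_sub x 1 1, one_add_one_eq_two]
  simp only [map_add, add_apply, mul_apply_eq_comp]
  abel

variable [CompleteSpace E]

theorem IsNearestNeighbour.adjoint (h : IsNearestNeighbour T r l m) :
    IsNearestNeighbour (star T) (star l) (star r) (star m) := by
  intro ψ x
  refine ext_inner_right 𝕜 fun v => ?_
  calc ⟪(star T ψ) x, v⟫_𝕜 = ⟪ψ, T (lp.single 2 x v)⟫_𝕜 := by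
        rw [← lp.inner_single_right, ContinuousLinearMap.star_eq_adjoint,
          ContinuousLinearMap.adjoint_inner_left]
    _ = _ := by
        simp only [h.apply_single, inner_add_right, inner_add_left, lp.inner_single_right,
          ContinuousLinearMap.star_eq_adjoint, ContinuousLinearMap.adjoint_inner_left]
        ring

theorem IsNearestNeighbour.mul_star_eq_one_iff (h : IsNearestNeighbour T r l m) :
    T * star T = 1 ↔ CoisometryCoeffs r l m := by
  rw [eq_one_iff_of_fiveBand (h.mul_apply h.adjoint), coisometryCoeffs_iff_fiveBand]

theorem IsNearestNeighbour.mem_unitary_iff (h : IsNearestNeighbour T r l m) :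
    T ∈ unitary (ℓ²(E) →L[𝕜] ℓ²(E)) ↔
      CoisometryCoeffs r l m ∧ CoisometryCoeffs (star l) (star r) (star m) := by
  have h' := h.adjoint.mul_star_eq_one_iff
  rw [star_star] at h'
  rw [Unitary.mem_iff, h', h.mul_star_eq_one_iff, and_comm]

end NearestNeighbour

open Matrix

theorem qca_unitarity_iff (Λ : ℕ) (R L M : Matrix (Fin Λ) (Fin Λ) ℂ)
    (U : lp (fun _ : ℤ => EuclideanSpace ℂ (Fin Λ)) 2 →L[ℂ]
         lp (fun _ : ℤ => EuclideanSpace ℂ (Fin Λ)) 2)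
    (hU : ∀ (ψ : lp (fun _ : ℤ => EuclideanSpace ℂ (Fin Λ)) 2) (x : ℤ) (i : Fin Λ),
      (U ψ : ∀ _ : ℤ, EuclideanSpace ℂ (Fin Λ)) x i =
        R.mulVec (fun j => (ψ : ∀ _ : ℤ, EuclideanSpace ℂ (Fin Λ)) (x + 1) j) i
        + L.mulVec (fun j => (ψ : ∀ _ : ℤ, EuclideanSpace ℂ (Fin Λ)) (x - 1) j) i
        + M.mulVec (fun j => (ψ : ∀ _ : ℤ, EuclideanSpace ℂ (Fin Λ)) x j) i) :
    U ∈ unitary (lp (fun _ : ℤ => EuclideanSpace ℂ (Fin Λ)) 2 →L[ℂ]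
                 lp (fun _ : ℤ => EuclideanSpace ℂ (Fin Λ)) 2) ↔
      (R * Rᴴ + L * Lᴴ + M * Mᴴ = 1 ∧ M * Rᴴ + L * Mᴴ = 0 ∧ L * Rᴴ = 0) := by
  set e := toEuclideanCLM (n := Fin Λ) (𝕜 := ℂ)
  have hNN : IsNearestNeighbour U (e R) (e L) (e M) := fun ψ x => by ext i; simp [e, hU]
  rw [hNN.mem_unitary_iff, ← map_star, ← map_star, ← map_star,
    coisometryCoeffs_map_iff (EquivLike.injective e),
    coisometryCoeffs_map_iff (EquivLike.injective e), Matrix.coisometryCoeffs_star_iff, and_self,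
    CoisometryCoeffs]
  simp only [star_eq_conjTranspose]
end

section
/- For m ∈ [0,1] and k ∈ ℝ, the normalized vectors |s⟩_k = (1/√2)(√(1 − s v), s √(1 + s v))ᵀ with s = ±1, where v = ∂_k ω(k,m) is the group velocity of the dispersion ω(k,m) = arccos(√(1−m²) cos k), are eigenvectors of U(k) = ((√(1−m²) e^{ik}, −i m), (−i m, √(1−m²) e^{−ik})) with eigenvalues e^{−i s ω(k,m)}, provided appropriate phase conventions; in particular the two vectors |+⟩_k and |−⟩_k are orthonormal. -/
/-!
With `n = √(1 - m²)` and `ω = arccos (n cos k)` one has `cos ω = n cos k` and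
`sin² ω = m² + (n sin k)²`, so `v = n sin k / sin ω` satisfies `sin ω · v = n sin k` and
`sin ω · √(1 - v²) = m` (also when `sin ω = 0`, where the division returns `0`, since then
`n sin k = 0`). The real parts of the eigenvalue equations are `cos ω = n cos k`; the imaginary
parts reduce, via `(1 - s v)(1 + s v) = 1 - v²`, to `sin ω · √(1 - v²) = m`.
-/

open Matrix

namespace DiracAutomaton

open Real

lemma cos_arccos_mul_cos {n : ℝ} (hn0 : 0 ≤ n) (hn1 : n ≤ 1) (k : ℝ) :
    cos (arccos (n * cos k)) = n * cos k := by
  have h : |n * cos k| ≤ 1 := by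
    rw [abs_mul, abs_of_nonneg hn0]
    exact mul_le_one₀ hn1 (abs_nonneg _) (abs_cos_le_one k)
  exact cos_arccos (neg_le_of_abs_le h) (le_of_abs_le h)

lemma sin_arccos_mul_cos_sq {n : ℝ} (hn0 : 0 ≤ n) (hn1 : n ≤ 1) (k : ℝ) :
    sin (arccos (n * cos k)) ^ 2 = 1 - n ^ 2 + (n * sin k) ^ 2 := by
  have h := sin_sq_add_cos_sq (arccos (n * cos k))
  rw [cos_arccos_mul_cos hn0 hn1] at h
  linear_combination h - n ^ 2 * sin_sq_add_cos_sq k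

section GroupVelocity

variable {σ m p : ℝ}

lemma mul_div_of_sq_eq_sq_add_sq (h : σ ^ 2 = m ^ 2 + p ^ 2) : σ * (p / σ) = p := by
  rcases eq_or_ne σ 0 with rfl | hσ
  · nlinarith [sq_nonneg m, sq_nonneg p]
  · exact mul_div_cancel₀ p hσ

lemma div_sq_le_one_of_sq_eq_sq_add_sq (h : σ ^ 2 = m ^ 2 + p ^ 2) : (p / σ) ^ 2 ≤ 1 := by
  rcases eq_or_ne σ 0 with rfl | hσ
  · simp
  · rw [div_pow, div_le_one (by positivity)]
    nlinarith [sq_nonneg m]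

lemma mul_sqrt_one_sub_div_sq (hσ : 0 ≤ σ) (hm : 0 ≤ m) (h : σ ^ 2 = m ^ 2 + p ^ 2) :
    σ * √(1 - (p / σ) ^ 2) = m := by
  have hsq : (σ * √(1 - (p / σ) ^ 2)) ^ 2 = m ^ 2 := by
    rw [mul_pow, sq_sqrt (sub_nonneg.2 (div_sq_le_one_of_sq_eq_sq_add_sq h)), mul_sub,
      ← mul_pow, mul_div_of_sq_eq_sq_add_sq h]
    linarith
  exact (sq_eq_sq₀ (by positivity) hm).1 hsq

end GroupVelocity

section Spinor

variable {s v σ m : ℝ}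

lemma sq_sqrt_one_sub_mul (hs : s ^ 2 = 1) (hv : v ^ 2 ≤ 1) :
    √(1 - s * v) ^ 2 = 1 - s * v :=
  sq_sqrt (by nlinarith [sq_nonneg (s + v)])

lemma sq_sqrt_one_add_mul (hs : s ^ 2 = 1) (hv : v ^ 2 ≤ 1) :
    √(1 + s * v) ^ 2 = 1 + s * v :=
  sq_sqrt (by nlinarith [sq_nonneg (s - v)])

lemma sqrt_one_sub_mul_mul_sqrt_one_add_mul (hs : s ^ 2 = 1) (hv : v ^ 2 ≤ 1) :
    √(1 - s * v) * √(1 + s * v) = √(1 - v ^ 2) := by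
  rw [← sqrt_mul (by nlinarith [sq_nonneg (s + v)])]
  congr 1
  linear_combination -v ^ 2 * hs

lemma eigen_identity_fst (hs : s ^ 2 = 1) (hv : v ^ 2 ≤ 1) (hm : σ * √(1 - v ^ 2) = m) :
    (σ * v + s * σ) * √(1 - s * v) = m * (s * √(1 + s * v)) := by
  rw [← hm, ← sqrt_one_sub_mul_mul_sqrt_one_add_mul hs hv]
  linear_combination -σ * √(1 - s * v) * (v * hs + s * sq_sqrt_one_add_mul hs hv)

lemma eigen_identity_snd (hs : s ^ 2 = 1) (hv : v ^ 2 ≤ 1) (hm : σ * √(1 - v ^ 2) = m) :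
    m * √(1 - s * v) = (s * σ - σ * v) * (s * √(1 + s * v)) := by
  rw [← hm, ← sqrt_one_sub_mul_mul_sqrt_one_add_mul hs hv]
  linear_combination σ * √(1 + s * v) * (sq_sqrt_one_sub_mul hs hv - hs)

end Spinor

noncomputable def diracMatrix (n m k : ℝ) : Matrix (Fin 2) (Fin 2) ℂ :=
  !![(n : ℂ) * Complex.exp (Complex.I * k), -Complex.I * m;
     -Complex.I * m, (n : ℂ) * Complex.exp (-(Complex.I * k))]

noncomputable def diracSpinor (v s : ℝ) : Fin 2 → ℂ :=
  ![(√(1 - s * v) / √2 : ℝ), ((s * √(1 + s * v) / √2 : ℝ) : ℂ)]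

open Complex

lemma exp_I_mul_ofReal (k : ℝ) : exp (I * k) = Real.cos k + Real.sin k * I := by
  rw [mul_comm, exp_mul_I, ← ofReal_cos, ← ofReal_sin]

lemma exp_neg_I_mul_ofReal (k : ℝ) : exp (-(I * k)) = Real.cos k - Real.sin k * I := by
  rw [show -(I * k) = I * ((-k : ℝ) : ℂ) by push_cast; ring, exp_I_mul_ofReal, Real.cos_neg,
    Real.sin_neg, ofReal_neg]
  ring

lemma exp_neg_I_mul_mul_of_sq_eq_one {s : ℝ} (hs : s ^ 2 = 1) (ω : ℝ) :
    exp (-(I * s * ω)) = Real.cos ω - s * Real.sin ω * I := by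
  rcases sq_eq_one_iff.1 hs with rfl | rfl
  · simpa using exp_neg_I_mul_ofReal ω
  · simpa using exp_I_mul_ofReal ω

theorem diracMatrix_mulVec_diracSpinor {n m k ω v s : ℝ} (hs : s ^ 2 = 1)
    (hcos : Real.cos ω = n * Real.cos k) (hvel : Real.sin ω * v = n * Real.sin k)
    (hv : v ^ 2 ≤ 1) (hmass : Real.sin ω * √(1 - v ^ 2) = m) :
    diracMatrix n m k *ᵥ diracSpinor v s = exp (-(I * s * ω)) • diracSpinor v s := by
  have h1 := congrArg ofReal (eigen_identity_fst hs hv hmass)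
  have h2 := congrArg ofReal (eigen_identity_snd hs hv hmass)
  have hcos' := congrArg ofReal hcos
  have hvel' := congrArg ofReal hvel
  rw [exp_neg_I_mul_mul_of_sq_eq_one hs]
  ext i
  fin_cases i
  · simp only [diracMatrix, diracSpinor, mulVec, dotProduct, Fin.sum_univ_two, of_apply, cons_val',
      cons_val_zero, cons_val_one, cons_val_fin_one, Pi.smul_apply, smul_eq_mul, neg_mul,
      exp_I_mul_ofReal]
    linear_combination (norm := skip) (-(√(1 - s * v) / √2 : ℝ) : ℂ) * hcos'
      - I * ((√(1 - s * v) / √2 : ℝ) : ℂ) * hvel' + I / (√2 : ℝ) * h1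
    push_cast
    ring
  · simp only [diracMatrix, diracSpinor, mulVec, dotProduct, Fin.sum_univ_two, of_apply, cons_val',
      cons_val_zero, cons_val_one, cons_val_fin_one, Pi.smul_apply, smul_eq_mul, neg_mul,
      exp_neg_I_mul_ofReal]
    linear_combination (norm := skip) (-(s * √(1 + s * v) / √2 : ℝ) : ℂ) * hcos'
      + I * ((s * √(1 + s * v) / √2 : ℝ) : ℂ) * hvel' - I / (√2 : ℝ) * h2
    push_cast
    ring

open ComplexConjugate

lemma sum_conj_diracSpinor_mul (v s s' : ℝ) :
    ∑ i, conj (diracSpinor v s i) * diracSpinor v s' i =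
      ((√(1 - s * v) * √(1 - s' * v) + s * s' * (√(1 + s * v) * √(1 + s' * v))) / 2 : ℝ) := by
  simp only [Fin.sum_univ_two, diracSpinor, cons_val_zero, cons_val_one, cons_val_fin_one,
    conj_ofReal, ← ofReal_mul, ← ofReal_add]
  congr 1
  rw [div_mul_div_comm, div_mul_div_comm, mul_self_sqrt zero_le_two]
  ring

theorem diracSpinor_orthonormal {v s s' : ℝ} (hv : v ^ 2 ≤ 1) (hs : s ^ 2 = 1)
    (hs' : s' ^ 2 = 1) :
    ∑ i, conj (diracSpinor v s i) * diracSpinor v s' i = if s = s' then 1 else 0 := by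
  rw [sum_conj_diracSpinor_mul]
  split_ifs with hss'
  · subst hss'
    norm_cast
    linear_combination (sq_sqrt_one_sub_mul hs hv + s ^ 2 * sq_sqrt_one_add_mul hs hv
      + (1 + s * v) * hs) / 2
  · obtain rfl : s' = -s :=
      (sq_eq_sq_iff_eq_or_eq_neg.1 (hs'.trans hs.symm)).resolve_left (Ne.symm hss')
    simp only [neg_mul, sub_neg_eq_add, ← sub_eq_add_neg]
    norm_cast
    linear_combination -√(1 - s * v) * √(1 + s * v) * hs / 2

end DiracAutomaton

open DiracAutomaton in
theorem dirac_automaton_eigenvectors (m k : ℝ) (hm : m ∈ Set.Icc (0:ℝ) 1) :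
    let n : ℝ := Real.sqrt (1 - m ^ 2)
    let ω : ℝ := Real.arccos (n * Real.cos k)
    let v : ℝ := n * Real.sin k / Real.sin ω
    let U : Matrix (Fin 2) (Fin 2) ℂ :=
      !![(n : ℂ) * Complex.exp (Complex.I * k), -Complex.I * m;
         -Complex.I * m, (n : ℂ) * Complex.exp (-(Complex.I * k))]
    let u : ℝ → Fin 2 → ℂ := fun s =>
      ![(Real.sqrt (1 - s * v) / Real.sqrt 2 : ℝ),
        ((s * Real.sqrt (1 + s * v) / Real.sqrt 2 : ℝ) : ℂ)]
    (∀ s : ℝ, s = 1 ∨ s = -1 →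
        U.mulVec (u s) = Complex.exp (-(Complex.I * s * ω)) • u s) ∧
    (∀ s s' : ℝ, (s = 1 ∨ s = -1) → (s' = 1 ∨ s' = -1) →
        (∑ i : Fin 2, (starRingEnd ℂ) (u s i) * u s' i) = if s = s' then 1 else 0) := by
  intro n ω v U u
  obtain ⟨hm0, hm1⟩ := hm
  have hn0 : 0 ≤ n := Real.sqrt_nonneg _
  have hn1 : n ≤ 1 := Real.sqrt_le_one.2 (by nlinarith)
  have hσ0 : 0 ≤ Real.sin ω :=
    Real.sin_nonneg_of_nonneg_of_le_pi (Real.arccos_nonneg _) (Real.arccos_le_pi _)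
  have hσ : Real.sin ω ^ 2 = m ^ 2 + (n * Real.sin k) ^ 2 := by
    rw [sin_arccos_mul_cos_sq hn0 hn1, Real.sq_sqrt (by nlinarith)]
    ring
  have hv : v ^ 2 ≤ 1 := div_sq_le_one_of_sq_eq_sq_add_sq hσ
  refine ⟨fun s hs => ?_, fun s s' hs hs' => ?_⟩
  · exact diracMatrix_mulVec_diracSpinor (sq_eq_one_iff.2 hs) (cos_arccos_mul_cos hn0 hn1 k)
      (mul_div_of_sq_eq_sq_add_sq hσ) hv (mul_sqrt_one_sub_div_sq hσ0 hm0 hσ)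
  · exact diracSpinor_orthonormal hv (sq_eq_one_iff.2 hs) (sq_eq_one_iff.2 hs')
end

section
/- The group velocity of the Dirac automaton dispersion relation satisfies v(k₀, m) = √((1 − m²)/(1 + m² cot²(k₀))) for k₀ ∈ (0, π) and m ∈ (0, 1), where v = ∂_k ω evaluated at k₀ and ω(k,m) = arccos(√(1−m²) cos k). -/
/-!
With `a = √(1 - m²)`, the chain rule gives `ω'(k) = a sin k / √(1 - a² cos² k)`, and
`1 - a² cos² k = sin² k · (1 + m² cot² k)`, so for `sin k > 0` this is `√(a² / (1 + m² cot² k))`.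
-/

open Real

theorem hasDerivAt_arccos_mul_cos {a k : ℝ} (h : |a * cos k| < 1) :
    HasDerivAt (fun x : ℝ => arccos (a * cos x)) (a * sin k / √(1 - (a * cos k) ^ 2)) k := by
  obtain ⟨hlo, hhi⟩ := abs_lt.mp h
  refine ((hasDerivAt_arccos hlo.ne' hhi.ne).comp k ((hasDerivAt_cos k).const_mul a)).congr_deriv ?_
  ring

theorem abs_cos_lt_one_of_sin_pos {k : ℝ} (hk : 0 < sin k) : |cos k| < 1 := by
  rw [← sq_lt_one_iff_abs_lt_one, cos_sq']
  linarith [pow_pos hk 2]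

theorem one_sub_sq_mul_cos_sq {a k : ℝ} (hk : sin k ≠ 0) :
    1 - (a * cos k) ^ 2 = sin k ^ 2 * (1 + (1 - a ^ 2) * (cos k / sin k) ^ 2) := by
  field_simp
  linear_combination -sin_sq_add_cos_sq k

theorem mul_sin_div_sqrt_eq_sqrt {a k : ℝ} (ha₀ : 0 ≤ a) (ha₁ : a ≤ 1) (hk : 0 < sin k) :
    a * sin k / √(1 - (a * cos k) ^ 2) = √(a ^ 2 / (1 + (1 - a ^ 2) * (cos k / sin k) ^ 2)) := by
  have hX : 0 < 1 + (1 - a ^ 2) * (cos k / sin k) ^ 2 := by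
    have : a ^ 2 ≤ 1 := pow_le_one₀ ha₀ ha₁
    positivity
  rw [one_sub_sq_mul_cos_sq hk.ne', sqrt_mul (sq_nonneg _), sqrt_sq hk.le,
    sqrt_div (sq_nonneg _), sqrt_sq ha₀]
  field_simp

theorem dirac_automaton_group_velocity (m k₀ : ℝ) (hm : m ∈ Set.Ioo (0:ℝ) 1)
    (hk : k₀ ∈ Set.Ioo 0 Real.pi) :
    HasDerivAt (fun k : ℝ => Real.arccos (Real.sqrt (1 - m ^ 2) * Real.cos k))
      (Real.sqrt ((1 - m ^ 2) / (1 + m ^ 2 * (Real.cos k₀ / Real.sin k₀) ^ 2))) k₀ := by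
  have hsin : 0 < sin k₀ := sin_pos_of_pos_of_lt_pi hk.1 hk.2
  have hm_sq : 0 ≤ 1 - m ^ 2 := by nlinarith [hm.1, hm.2]
  have ha₀ : 0 ≤ √(1 - m ^ 2) := sqrt_nonneg _
  have ha₁ : √(1 - m ^ 2) ≤ 1 := sqrt_le_one.mpr (sub_le_self _ (sq_nonneg m))
  have h_abs : |√(1 - m ^ 2) * cos k₀| < 1 := by
    rw [abs_mul, abs_of_nonneg ha₀]
    exact (mul_le_of_le_one_left (abs_nonneg _) ha₁).trans_lt (abs_cos_lt_one_of_sin_pos hsin)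
  convert hasDerivAt_arccos_mul_cos h_abs using 1
  rw [mul_sin_div_sqrt_eq_sqrt ha₀ ha₁ hsin, sq_sqrt hm_sq, sub_sub_cancel]
end

section
/- For all m ∈ [0,1] and all k ∈ ℝ, the group velocity v = ∂_k ω(k,m) of the dispersion ω(k,m) = arccos(√(1−m²) cos k) satisfies |v| ≤ √(1−m²) ≤ 1 (where ω is differentiable). -/
/-!
Where `|a cos k| < 1` the chain rule gives `v = a sin k / √(1 - a² cos² k)`, and
`sin² k = 1 - cos² k ≤ 1 - a² cos² k` because `a² ≤ 1`. Where `|a cos k| ≥ 1`, the function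
`x ↦ arccos (a cos x)` takes one of the extreme values `0`, `π` of `arccos` at `k`, so any
derivative it has there vanishes.
-/

open Real

theorem eq_zero_of_hasDerivAt_arccos_comp_of_one_le_abs {f : ℝ → ℝ} {v k : ℝ}
    (hv : HasDerivAt (fun x => arccos (f x)) v k) (hk : 1 ≤ |f k|) : v = 0 := by
  rcases le_abs'.mp hk with hneg | hpos
  · refine IsLocalMax.hasDerivAt_eq_zero (Filter.Eventually.of_forall fun x => ?_) hv
    simpa [arccos_eq_pi.mpr hneg] using arccos_le_pi (f x)
  · refine IsLocalMin.hasDerivAt_eq_zero (Filter.Eventually.of_forall fun x => ?_) hv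
    simpa [arccos_eq_zero.mpr hpos] using arccos_nonneg (f x)

theorem hasDerivAt_arccos_const_mul_cos {a k : ℝ} (hk : |a * cos k| < 1) :
    HasDerivAt (fun x => arccos (a * cos x)) (a * sin k / √(1 - (a * cos k) ^ 2)) k := by
  obtain ⟨hlo, hhi⟩ := abs_lt.mp hk
  refine ((hasDerivAt_arccos hlo.ne' hhi.ne).comp k ((hasDerivAt_cos k).const_mul a)).congr_deriv ?_
  ring

theorem abs_sin_le_sqrt_one_sub_sq_mul_cos {a : ℝ} (ha : |a| ≤ 1) (k : ℝ) :
    |sin k| ≤ √(1 - (a * cos k) ^ 2) := by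
  rw [← sqrt_sq_eq_abs, sin_sq]
  refine sqrt_le_sqrt ?_
  have ha2 : a ^ 2 ≤ 1 := (sq_le_one_iff_abs_le_one a).mpr ha
  nlinarith [mul_le_mul_of_nonneg_right ha2 (sq_nonneg (cos k))]

theorem abs_le_of_hasDerivAt_arccos_const_mul_cos {a k v : ℝ} (ha : |a| ≤ 1)
    (hv : HasDerivAt (fun x => arccos (a * cos x)) v k) : |v| ≤ |a| := by
  by_cases hk : |a * cos k| < 1
  · have hs : 0 < √(1 - (a * cos k) ^ 2) :=
      sqrt_pos.mpr (by nlinarith [sq_abs (a * cos k), abs_nonneg (a * cos k)])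
    rw [hv.unique (hasDerivAt_arccos_const_mul_cos hk), abs_div, abs_mul,
      abs_of_pos hs, div_le_iff₀ hs]
    exact mul_le_mul_of_nonneg_left (abs_sin_le_sqrt_one_sub_sq_mul_cos ha k) (abs_nonneg a)
  · rw [eq_zero_of_hasDerivAt_arccos_comp_of_one_le_abs hv (not_lt.mp hk), abs_zero]
    exact abs_nonneg a

theorem dirac_automaton_group_velocity_bound_general (m k v : ℝ)
    (hv : HasDerivAt (fun k : ℝ => Real.arccos (Real.sqrt (1 - m ^ 2) * Real.cos k)) v k) :
    |v| ≤ Real.sqrt (1 - m ^ 2) ∧ Real.sqrt (1 - m ^ 2) ≤ 1 := by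
  have h_le_one : √(1 - m ^ 2) ≤ 1 := sqrt_le_one.mpr (sub_le_self 1 (sq_nonneg m))
  have h_abs_eq : |√(1 - m ^ 2)| = √(1 - m ^ 2) := abs_of_nonneg (sqrt_nonneg _)
  refine ⟨?_, h_le_one⟩
  simpa only [h_abs_eq] using
    abs_le_of_hasDerivAt_arccos_const_mul_cos (h_abs_eq.symm ▸ h_le_one) hv

theorem dirac_automaton_group_velocity_bound (m k v : ℝ) (hm : m ∈ Set.Icc (0:ℝ) 1)
    (hv : HasDerivAt (fun k : ℝ => Real.arccos (Real.sqrt (1 - m ^ 2) * Real.cos k)) v k) :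
    |v| ≤ Real.sqrt (1 - m ^ 2) ∧ Real.sqrt (1 - m ^ 2) ≤ 1 :=
  dirac_automaton_group_velocity_bound_general m k v hv
end

section
/- For every m ∈ [0,1] and every k ∈ [0, π), the inequality m² cos²(k) + sin²(k) − √(1−m²) cos(k) (k² + m²) ≥ 0 holds. -/
/-!
Halving the angle, `tan (k/2) ≥ k/2` gives `sin k ≥ k (1 + cos k) / 2`, hence
`sin² k ≥ k² ((1 + cos k)/2)² ≥ k² cos k` on `[0, π)`. With `n = √(1 - m²)` and `c = cos k`,
the expression equals `n (sin² k - k² c) + (1 - n)(1 + n c² - n (1 + n) c)`, and the quadratic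
in `c` has discriminant `n (n (1 + n)² - 4) ≤ 0` for `0 ≤ n ≤ 1`.
-/

open Real

lemma mul_cos_le_sin {y : ℝ} (h0 : 0 ≤ y) (h1 : y < π / 2) : y * cos y ≤ sin y := by
  have hcos : 0 < cos y := cos_pos_of_mem_Ioo ⟨by linarith [pi_pos], h1⟩
  simpa [tan_eq_sin_div_cos, le_div_iff₀ hcos] using le_tan h0 h1

lemma mul_one_add_cos_le_two_mul_sin {x : ℝ} (h0 : 0 ≤ x) (h1 : x < π) :
    x * (1 + cos x) ≤ 2 * sin x := by
  obtain ⟨y, rfl⟩ : ∃ y, x = 2 * y := ⟨x / 2, by ring⟩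
  have hy := mul_cos_le_sin (y := y) (by linarith) (by linarith)
  have hcos : 0 ≤ cos y := cos_nonneg_of_mem_Icc ⟨by linarith, by linarith⟩
  rw [cos_two_mul, sin_two_mul]
  nlinarith [mul_le_mul_of_nonneg_right hy hcos]

lemma cos_mul_sq_le_sin_sq {x : ℝ} (h0 : 0 ≤ x) (h1 : x < π) :
    cos x * x ^ 2 ≤ sin x ^ 2 := by
  have hsin := mul_one_add_cos_le_two_mul_sin h0 h1
  have hlow : 0 ≤ x * (1 + cos x) := mul_nonneg h0 (by linarith [neg_one_le_cos x])
  calc cos x * x ^ 2 ≤ ((1 + cos x) / 2) ^ 2 * x ^ 2 := by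
        gcongr; nlinarith [sq_nonneg (1 - cos x)]
    _ = (x * (1 + cos x) / 2) ^ 2 := by ring
    _ ≤ sin x ^ 2 := by gcongr; linarith

lemma one_add_mul_sq_sub_mul_nonneg {n : ℝ} (h0 : 0 ≤ n) (h1 : n ≤ 1) (c : ℝ) :
    0 ≤ 1 + n * c ^ 2 - n * (1 + n) * c := by
  nlinarith [mul_nonneg h0 (sq_nonneg (c - (1 + n) / 2)), mul_nonneg h0 (sub_nonneg.2 h1),
    mul_nonneg (mul_nonneg h0 h0) (sub_nonneg.2 h1)]

theorem z_inequality (m k : ℝ) (hm : m ∈ Set.Icc (0:ℝ) 1)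
    (hk : k ∈ Set.Ico 0 Real.pi) :
    m ^ 2 * Real.cos k ^ 2 + Real.sin k ^ 2 -
      Real.sqrt (1 - m ^ 2) * Real.cos k * (k ^ 2 + m ^ 2) ≥ 0 := by
  set n := √(1 - m ^ 2)
  have hn2 : n ^ 2 = 1 - m ^ 2 := sq_sqrt (by nlinarith [hm.1, hm.2])
  have hn0 : 0 ≤ n := sqrt_nonneg _
  have hn1 : n ≤ 1 := by nlinarith
  have hsin_sq := cos_mul_sq_le_sin_sq hk.1 hk.2
  have hquad := one_add_mul_sq_sub_mul_nonneg hn0 hn1 (cos k)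
  have split : m ^ 2 * cos k ^ 2 + sin k ^ 2 - n * cos k * (k ^ 2 + m ^ 2) =
      n * (sin k ^ 2 - cos k * k ^ 2) + (1 - n) * (1 + n * cos k ^ 2 - n * (1 + n) * cos k) := by
    linear_combination (cos k ^ 2 - n * cos k) * hn2 + (1 - n) * sin_sq_add_cos_sq k
  rw [ge_iff_le, split]
  exact add_nonneg (mul_nonneg hn0 (sub_nonneg.2 hsin_sq)) (mul_nonneg (sub_nonneg.2 hn1) hquad)
end

section
/- Define β(k,m) = (1/2)(1 − v v_D − √((1−v²)(1−v_D²))), where v = √(1−m²) sin k / √(sin²k + m² cos²k) and v_D = k/√(k²+m²). Then for each m ∈ [0,1], β is an even nonnegative function of k and is nondecreasing on [0, π). -/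
/-!
For `m > 0` both velocities are sines of angles in `(-π/2, π/2)`: `v_D = sin (arctan (k / m))` and
`v = sin (arctan (√(1 - m²) sin k / m))`. Hence `β = (1 - cos θ) / 2`, where `θ` is the difference
of the two angles. On `[0, π]` the derivative of `θ` is nonnegative, by the elementary bound
`k² cos k ≤ sin² k`; since moreover `θ 0 = 0` and `θ < π`, `β` is nondecreasing there. For `m = 0`
both velocities equal the sign of `k` on `[0, π)`, so `β` vanishes. Evenness holds because both
velocities are odd in `k`.
-/

open Real Set

noncomputable def automatonVelocity (m k : ℝ) : ℝ :=
  √(1 - m ^ 2) * sin k / √(sin k ^ 2 + m ^ 2 * cos k ^ 2)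

noncomputable def diracVelocity (m k : ℝ) : ℝ := k / √(k ^ 2 + m ^ 2)

noncomputable def beta (v w : ℝ) : ℝ := 1 / 2 * (1 - v * w - √((1 - v ^ 2) * (1 - w ^ 2)))

noncomputable def angleGap (m k : ℝ) : ℝ := arctan (k / m) - arctan (√(1 - m ^ 2) * sin k / m)

section beta

variable {v w : ℝ}

lemma beta_neg_neg (v w : ℝ) : beta (-v) (-w) = beta v w := by
  simp only [beta, neg_mul_neg, neg_sq]

lemma beta_nonneg (hv : v ^ 2 ≤ 1) (hw : w ^ 2 ≤ 1) : 0 ≤ beta v w := by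
  have hvw : v * w ≤ 1 := by nlinarith [sq_nonneg (v - w)]
  have hsqrt : √((1 - v ^ 2) * (1 - w ^ 2)) ≤ 1 - v * w :=
    sqrt_le_iff.2 ⟨by linarith, by nlinarith [sq_nonneg (v - w)]⟩
  unfold beta
  linarith

lemma beta_self (hv : v ^ 2 ≤ 1) : beta v v = 0 := by
  rw [beta, sqrt_mul_self (by linarith)]
  ring

lemma beta_sin_sin {φ ψ : ℝ} (hφ : 0 ≤ cos φ) (hψ : 0 ≤ cos ψ) :
    beta (sin φ) (sin ψ) = (1 - cos (ψ - φ)) / 2 := by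
  rw [beta, ← cos_sq', ← cos_sq', ← mul_pow, sqrt_sq (mul_nonneg hφ hψ), cos_sub]
  ring

end beta

lemma sq_div_sqrt_le_one {a b : ℝ} (h : a ^ 2 ≤ b) : (a / √b) ^ 2 ≤ 1 := by
  have hb : 0 ≤ b := (sq_nonneg a).trans h
  rw [div_pow, sq_sqrt hb]
  exact div_le_one_of_le₀ h hb

lemma div_sqrt_sq_add_sq_eq_sin_arctan (a : ℝ) {m : ℝ} (hm : 0 < m) :
    a / √(a ^ 2 + m ^ 2) = sin (arctan (a / m)) := by
  have h : 1 + (a / m) ^ 2 = (a ^ 2 + m ^ 2) / m ^ 2 := by field_simp; ring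
  rw [sin_arctan, h, sqrt_div (by positivity), sqrt_sq hm.le]
  field_simp

section velocities

variable {m : ℝ}

lemma automatonVelocity_neg (m k : ℝ) : automatonVelocity m (-k) = -automatonVelocity m k := by
  simp only [automatonVelocity, sin_neg, cos_neg, neg_sq, mul_neg, neg_div]

lemma diracVelocity_neg (m k : ℝ) : diracVelocity m (-k) = -diracVelocity m k := by
  simp only [diracVelocity, neg_sq, neg_div]

lemma automatonVelocity_sq_le_one (m k : ℝ) : automatonVelocity m k ^ 2 ≤ 1 := by
  have hs : √(1 - m ^ 2) ^ 2 ≤ 1 := pow_le_one₀ (sqrt_nonneg _) (sqrt_le_one.2 (by nlinarith))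
  refine sq_div_sqrt_le_one ?_
  rw [mul_pow]
  nlinarith [sq_nonneg (sin k), sq_nonneg (m * cos k)]

lemma diracVelocity_sq_le_one (m k : ℝ) : diracVelocity m k ^ 2 ≤ 1 :=
  sq_div_sqrt_le_one (by nlinarith [sq_nonneg m])

lemma diracVelocity_eq_sin_arctan (hm : 0 < m) (k : ℝ) :
    diracVelocity m k = sin (arctan (k / m)) :=
  div_sqrt_sq_add_sq_eq_sin_arctan k hm

lemma automatonVelocity_eq_sin_arctan (hm0 : 0 < m) (hm1 : m ≤ 1) (k : ℝ) :
    automatonVelocity m k = sin (arctan (√(1 - m ^ 2) * sin k / m)) := by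
  have hden : sin k ^ 2 + m ^ 2 * cos k ^ 2 = (√(1 - m ^ 2) * sin k) ^ 2 + m ^ 2 := by
    rw [mul_pow, sq_sqrt (by nlinarith)]
    linear_combination m ^ 2 * sin_sq_add_cos_sq k
  rw [← div_sqrt_sq_add_sq_eq_sin_arctan _ hm0, automatonVelocity, hden]

lemma automatonVelocity_zero_eq_diracVelocity_zero {k : ℝ} (hk : k ∈ Ico 0 π) :
    automatonVelocity 0 k = diracVelocity 0 k := by
  rcases hk.1.eq_or_lt with rfl | hk0
  · simp [automatonVelocity, diracVelocity]
  · have hsin := sin_pos_of_pos_of_lt_pi hk0 hk.2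
    simp [automatonVelocity, diracVelocity, sqrt_sq, hk0.le, hsin.le, hk0.ne', hsin.ne']

end velocities

lemma mul_cos_le_sin_s13 {x : ℝ} (hx0 : 0 ≤ x) (hx1 : x ≤ π / 2) : x * cos x ≤ sin x := by
  rcases hx1.lt_or_eq with hx1 | rfl
  · have hcos := cos_pos_of_mem_Ioo ⟨by linarith [pi_pos], hx1⟩
    rw [← le_div_iff₀ hcos, ← tan_eq_sin_div_cos]
    exact le_tan hx0 hx1
  · simp

/-- A half-angle argument: with `h = x / 2`, this is `h² (cos² h - sin² h) ≤ sin² h cos² h`,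
which follows from `h cos h ≤ sin h ≤ h`. -/
lemma sq_mul_cos_le_sin_sq {x : ℝ} (hx0 : 0 ≤ x) (hx1 : x ≤ π) : x ^ 2 * cos x ≤ sin x ^ 2 := by
  obtain ⟨h, rfl⟩ : ∃ h, x = 2 * h := ⟨x / 2, by ring⟩
  have hcos := mul_cos_le_sin_s13 (x := h) (by linarith) (by linarith)
  have hsin := sin_le (x := h) (by linarith)
  have hsin0 : 0 ≤ sin h := sin_nonneg_of_nonneg_of_le_pi (by linarith) (by linarith)
  have hcos0 : 0 ≤ h * cos h :=
    mul_nonneg (by linarith) (cos_nonneg_of_mem_Icc ⟨by linarith [pi_pos], by linarith⟩)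
  have hcos2 := pow_le_pow_left₀ hcos0 hcos 2
  have hsin2 := mul_le_mul_of_nonneg_left (pow_le_pow_left₀ hsin0 hsin 2) (sq_nonneg (sin h))
  have hpyth := sin_sq_add_cos_sq h
  rw [sin_two_mul, cos_two_mul]
  nlinarith

lemma mul_cos_mul_le {s k : ℝ} (hs0 : 0 ≤ s) (hs1 : s ≤ 1) (hk0 : 0 ≤ k) (hk1 : k ≤ π) :
    s * cos k * (k ^ 2 + (1 - s ^ 2)) ≤ 1 - s ^ 2 * cos k ^ 2 := by
  have hk := sq_mul_cos_le_sin_sq hk0 hk1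
  rw [sin_sq] at hk
  have hc0 := neg_one_le_cos k
  have hc1 := cos_le_one k
  set c := cos k
  have hg : 0 ≤ 1 - c * s ^ 2 - c * s * (1 - c) := by
    rcases le_or_gt c 0 with hc | hc
    · nlinarith [mul_nonneg (neg_nonneg.2 hc) (mul_nonneg hs0 (by linarith : 0 ≤ s + 1 - c))]
    · -- `1 - c s² - c s (1 - c) = (1 - c)² + c (1 - s²) + c (1 - c) (1 - s)`
      nlinarith [mul_nonneg hc.le (mul_nonneg (by linarith : 0 ≤ 1 - s) (by linarith : 0 ≤ 1 + s)),
        mul_nonneg (mul_nonneg hc.le (by linarith : 0 ≤ 1 - c)) (by linarith : 0 ≤ 1 - s)]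
  -- using `k² c ≤ 1 - c²`, the difference of the two sides is at least
  -- `(1 - s) (1 - c s² - c s (1 - c))`
  nlinarith [mul_le_mul_of_nonneg_left hk hs0, mul_nonneg (by linarith : 0 ≤ 1 - s) hg]

section angleGap

variable {m : ℝ}

lemma hasDerivAt_angleGap (hm : m ≠ 0) (x : ℝ) :
    HasDerivAt (angleGap m)
      (m / (x ^ 2 + m ^ 2) -
        m * (√(1 - m ^ 2) * cos x) / ((√(1 - m ^ 2) * sin x) ^ 2 + m ^ 2)) x := by
  refine (((hasDerivAt_id' x).div_const m).arctan.sub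
    (((hasDerivAt_sin x).const_mul (√(1 - m ^ 2))).div_const m).arctan).congr_deriv ?_
  field_simp
  ring

lemma angleGap_deriv_nonneg (hm0 : 0 < m) (hm1 : m ≤ 1) {x : ℝ} (hx0 : 0 ≤ x) (hx1 : x ≤ π) :
    0 ≤ deriv (angleGap m) x := by
  have hs := sq_sqrt (by nlinarith : 0 ≤ 1 - m ^ 2)
  have key := mul_cos_mul_le (sqrt_nonneg (1 - m ^ 2)) (sqrt_le_one.2 (by nlinarith)) hx0 hx1
  rw [hs] at key
  rw [(hasDerivAt_angleGap hm0.ne' x).deriv, sub_nonneg,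
    div_le_div_iff₀ (by positivity) (by positivity), mul_pow, hs, sin_sq]
  nlinarith [mul_le_mul_of_nonneg_left key hm0.le]

lemma angleGap_monotoneOn (hm0 : 0 < m) (hm1 : m ≤ 1) : MonotoneOn (angleGap m) (Icc 0 π) := by
  refine monotoneOn_of_deriv_nonneg (convex_Icc 0 π)
    (fun x _ => (hasDerivAt_angleGap hm0.ne' x).continuousAt.continuousWithinAt)
    (fun x _ => (hasDerivAt_angleGap hm0.ne' x).differentiableAt.differentiableWithinAt) ?_
  rw [interior_Icc]
  exact fun x hx => angleGap_deriv_nonneg hm0 hm1 hx.1.le hx.2.le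

lemma angleGap_mem_Icc (hm0 : 0 < m) (hm1 : m ≤ 1) {k : ℝ} (hk : k ∈ Icc 0 π) :
    angleGap m k ∈ Icc 0 π := by
  constructor
  · simpa [angleGap] using angleGap_monotoneOn hm0 hm1 ⟨le_rfl, pi_pos.le⟩ hk hk.1
  · have := arctan_lt_pi_div_two (k / m)
    have := neg_pi_div_two_lt_arctan (√(1 - m ^ 2) * sin k / m)
    rw [angleGap]
    linarith

end angleGap

section beta_velocities

variable {m : ℝ}

lemma beta_velocities_eq_one_sub_cos_angleGap (hm0 : 0 < m) (hm1 : m ≤ 1) (k : ℝ) :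
    beta (automatonVelocity m k) (diracVelocity m k) = (1 - cos (angleGap m k)) / 2 := by
  rw [automatonVelocity_eq_sin_arctan hm0 hm1, diracVelocity_eq_sin_arctan hm0,
    beta_sin_sin (cos_arctan_pos _).le (cos_arctan_pos _).le, angleGap]

lemma beta_velocities_monotoneOn (hm0 : 0 < m) (hm1 : m ≤ 1) :
    MonotoneOn (fun k => beta (automatonVelocity m k) (diracVelocity m k)) (Icc 0 π) := by
  intro a ha b hb hab
  have hcos := antitoneOn_cos (angleGap_mem_Icc hm0 hm1 ha) (angleGap_mem_Icc hm0 hm1 hb)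
    (angleGap_monotoneOn hm0 hm1 ha hb hab)
  simp only [beta_velocities_eq_one_sub_cos_angleGap hm0 hm1]
  linarith

end beta_velocities

lemma beta_velocities_zero {k : ℝ} (hk : k ∈ Ico 0 π) :
    beta (automatonVelocity 0 k) (diracVelocity 0 k) = 0 := by
  rw [automatonVelocity_zero_eq_diracVelocity_zero hk, beta_self (diracVelocity_sq_le_one 0 k)]

theorem beta_even_nonneg_monotone (m : ℝ) (hm : m ∈ Set.Icc (0:ℝ) 1) :
    let v : ℝ → ℝ := fun k =>
      Real.sqrt (1 - m ^ 2) * Real.sin k /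
        Real.sqrt (Real.sin k ^ 2 + m ^ 2 * Real.cos k ^ 2)
    let vD : ℝ → ℝ := fun k => k / Real.sqrt (k ^ 2 + m ^ 2)
    let β : ℝ → ℝ := fun k =>
      (1 / 2) * (1 - v k * vD k - Real.sqrt ((1 - v k ^ 2) * (1 - vD k ^ 2)))
    (∀ k : ℝ, β (-k) = β k) ∧ (∀ k : ℝ, 0 ≤ β k) ∧
    MonotoneOn β (Set.Ico 0 Real.pi) := by
  obtain ⟨hm0, hm1⟩ := hm
  intro v vD β
  have hβ : β = fun k => beta (automatonVelocity m k) (diracVelocity m k) := rfl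
  simp only [hβ]
  refine ⟨fun k => ?_, fun k => ?_, ?_⟩
  · rw [automatonVelocity_neg, diracVelocity_neg, beta_neg_neg]
  · exact beta_nonneg (automatonVelocity_sq_le_one m k) (diracVelocity_sq_le_one m k)
  · rcases hm0.eq_or_lt with rfl | hm0
    · exact fun a ha b hb _ =>
        ((beta_velocities_zero ha).trans (beta_velocities_zero hb).symm).le
    · exact (beta_velocities_monotoneOn hm0 hm1).mono Ico_subset_Icc_self
end

section
/- For m ∈ [0,1] and |k| ≤ π, the automaton dispersion ω(k,m) = arccos(√(1−m²) cos k) and the Dirac dispersion ω_D(k,m) = √(k²+m²) agree to second order at (k,m) = (0,0): ω(k,m) = ω_D(k,m)(1 + O((k²+m²))) as (k,m) → (0,0); in particular ω(k,m)/ω_D(k,m) → 1 as (k,m) → (0,0) along any path with (k,m) ≠ (0,0). -/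
/-!
Put `r = √(k² + m²)`. Second-order Taylor expansion gives
`√(1 - m²) cos k = 1 - r²/2 + O(r⁴) = cos r + O(r⁴)`.
Although `arccos` is not Lipschitz at `1`, the slope of `cos` on `[r - t, r + t]` is of order `r`
(Jordan's inequality), so an `O(r⁴)` perturbation of `cos r` moves its `arccos` by at most
`t = O(r³)`: that is, `ω = r (1 + O(r²))`.
-/

open Real

lemma abs_sqrt_one_sub_sq_sub_le {m : ℝ} (hm : m ^ 2 ≤ 1) :
    |√(1 - m ^ 2) - (1 - m ^ 2 / 2)| ≤ m ^ 4 / 2 := by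
  have hs : √(1 - m ^ 2) ^ 2 = 1 - m ^ 2 := sq_sqrt (by linarith)
  have hs0 := sqrt_nonneg (1 - m ^ 2)
  rw [abs_le]
  constructor
  · nlinarith [sq_nonneg (√(1 - m ^ 2) - (1 - m ^ 2 / 2 - m ^ 4 / 2)), sq_nonneg m,
      sq_nonneg (m ^ 2), sq_nonneg (m ^ 3)]
  · nlinarith [sq_nonneg (√(1 - m ^ 2) - (1 - m ^ 2 / 2)), sq_nonneg (m ^ 2)]

lemma abs_sqrt_one_sub_sq_mul_cos_sub_cos_le {k m r : ℝ} (hr : r ^ 2 = k ^ 2 + m ^ 2)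
    (hr1 : |r| ≤ 1) : |√(1 - m ^ 2) * cos k - cos r| ≤ r ^ 4 := by
  have hk : |k| ≤ 1 := by
    rw [← sq_le_one_iff_abs_le_one] at hr1 ⊢; nlinarith [sq_nonneg m]
  have hm : m ^ 2 ≤ 1 := by rw [← sq_le_one_iff_abs_le_one] at hr1; nlinarith [sq_nonneg k]
  have hsqrt := abs_sqrt_one_sub_sq_sub_le hm
  have hcosk := cos_bound hk
  have hcosr := cos_bound hr1
  have hcos1 := abs_cos_le_one k
  have hhalf : |1 - m ^ 2 / 2| ≤ 1 := by rw [abs_le]; constructor <;> nlinarith [sq_nonneg m]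
  have hr4 : r ^ 4 = (k ^ 2 + m ^ 2) ^ 2 := by rw [← hr]; ring
  rw [(by decide : Even 4).pow_abs] at hcosk hcosr
  have hsplit : √(1 - m ^ 2) * cos k - cos r =
      (√(1 - m ^ 2) - (1 - m ^ 2 / 2)) * cos k + (1 - m ^ 2 / 2) * (cos k - (1 - k ^ 2 / 2))
        - (cos r - (1 - r ^ 2 / 2)) + m ^ 2 * k ^ 2 / 4 := by
    linear_combination (1 / 2 : ℝ) * hr
  have hterm1 : |(√(1 - m ^ 2) - (1 - m ^ 2 / 2)) * cos k| ≤ m ^ 4 / 2 := by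
    rw [abs_mul]; simpa using mul_le_mul hsqrt hcos1 (abs_nonneg _) (by positivity)
  have hterm2 : |(1 - m ^ 2 / 2) * (cos k - (1 - k ^ 2 / 2))| ≤ k ^ 4 * (5 / 96) := by
    rw [abs_mul]; simpa using mul_le_mul hhalf hcosk (abs_nonneg _) zero_le_one
  have hsum : m ^ 4 / 2 + k ^ 4 * (5 / 96) + r ^ 4 * (5 / 96) + m ^ 2 * k ^ 2 / 4 ≤ r ^ 4 := by
    rw [hr4]; nlinarith [sq_nonneg k, sq_nonneg m, mul_nonneg (sq_nonneg k) (sq_nonneg m)]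
  rw [hsplit, abs_le]
  rw [abs_le] at hterm1 hterm2 hcosr
  constructor <;> nlinarith [mul_nonneg (sq_nonneg m) (sq_nonneg k)]

lemma mul_mul_le_cos_sub_cos_add {x t : ℝ} (hx : 0 ≤ x) (ht : 0 ≤ t) (hxt : x + t ≤ π / 2) :
    4 / π ^ 2 * x * t ≤ cos x - cos (x + t) := by
  have hpi := pi_pos
  have h1 := mul_le_sin (x := x + t / 2) (by linarith) (by linarith)
  have h2 := mul_le_sin (x := t / 2) (by linarith) (by linarith)
  have hcos : cos x - cos (x + t) = 2 * sin (x + t / 2) * sin (t / 2) := by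
    rw [cos_sub_cos, show (x - (x + t)) / 2 = -(t / 2) by ring,
      show (x + (x + t)) / 2 = x + t / 2 by ring, sin_neg]; ring
  calc 4 / π ^ 2 * x * t ≤ 2 * (2 / π * (x + t / 2)) * (2 / π * (t / 2)) := by
        field_simp; nlinarith [mul_nonneg ht ht]
    _ ≤ 2 * sin (x + t / 2) * sin (t / 2) := by
        gcongr
        exact mul_nonneg zero_le_two ((mul_nonneg (by positivity) (by linarith)).trans h1)
    _ = cos x - cos (x + t) := hcos.symm

lemma abs_arccos_sub_le {x y t : ℝ} (ht : 0 ≤ t) (htx : t ≤ x / 2) (hxt : x + t ≤ π / 2)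
    (hy : |y - cos x| ≤ 2 / π ^ 2 * x * t) : |arccos y - x| ≤ t := by
  have hpi := pi_pos
  have hupper := mul_mul_le_cos_sub_cos_add (x := x) (by linarith) ht hxt
  have hlower := mul_mul_le_cos_sub_cos_add (x := x - t) (by linarith) ht (by linarith)
  rw [sub_add_cancel] at hlower
  have hcoef : 2 / π ^ 2 * x * t ≤ 4 / π ^ 2 * (x - t) * t := by
    rw [show 4 / π ^ 2 * (x - t) * t = 2 / π ^ 2 * (2 * (x - t)) * t by ring]
    gcongr; linarith
  have hcoef' : 2 / π ^ 2 * x * t ≤ 4 / π ^ 2 * x * t := by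
    have : 0 ≤ 2 / π ^ 2 * x * t := mul_nonneg (mul_nonneg (by positivity) (by linarith)) ht
    rw [show 4 / π ^ 2 * x * t = 2 / π ^ 2 * x * t + 2 / π ^ 2 * x * t by ring]; linarith
  rw [abs_le] at hy ⊢
  have hle : arccos y ≤ x + t := by
    rw [← arccos_cos (x := x + t) (by linarith) (by linarith)]
    exact arccos_le_arccos (by linarith)
  have hge : x - t ≤ arccos y := by
    rw [← arccos_cos (x := x - t) (by linarith) (by linarith)]
    exact arccos_le_arccos (by linarith)
  constructor <;> linarith

lemma abs_arccos_sqrt_one_sub_sq_mul_cos_sub_sqrt_le {k m : ℝ} (h : √(k ^ 2 + m ^ 2) ≤ 1 / 4) :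
    |arccos (√(1 - m ^ 2) * cos k) - √(k ^ 2 + m ^ 2)|
      ≤ 8 * (k ^ 2 + m ^ 2) * √(k ^ 2 + m ^ 2) := by
  set r := √(k ^ 2 + m ^ 2)
  have hr0 : 0 ≤ r := sqrt_nonneg _
  have hr : r ^ 2 = k ^ 2 + m ^ 2 := sq_sqrt (by positivity)
  rw [← hr]
  have hpi := pi_pos
  have hpi3 := pi_gt_three
  have hpi4 := pi_le_four
  apply abs_arccos_sub_le (by positivity) (by nlinarith) (by nlinarith)
  calc |√(1 - m ^ 2) * cos k - cos r| ≤ r ^ 4 :=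
        abs_sqrt_one_sub_sq_mul_cos_sub_cos_le hr (by rw [abs_of_nonneg hr0]; linarith)
    _ = 2 / 4 ^ 2 * r * (8 * r ^ 2 * r) := by ring
    _ ≤ 2 / π ^ 2 * r * (8 * r ^ 2 * r) := by gcongr

lemma abs_div_sub_one_le {a b c : ℝ} (hb : 0 < b) (h : |a - b| ≤ c * b) : |a / b - 1| ≤ c := by
  rwa [div_sub_one hb.ne', abs_div, abs_of_pos hb, div_le_iff₀ hb]

theorem dispersion_relations_agree (ω ωD : ℝ × ℝ → ℝ)
    (hω : ∀ p : ℝ × ℝ, ω p = Real.arccos (Real.sqrt (1 - p.2 ^ 2) * Real.cos p.1))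
    (hωD : ∀ p : ℝ × ℝ, ωD p = Real.sqrt (p.1 ^ 2 + p.2 ^ 2)) :
    (∃ C > (0:ℝ), ∃ δ > (0:ℝ), ∀ p : ℝ × ℝ, p.2 ∈ Set.Icc (0:ℝ) 1 → |p.1| ≤ Real.pi →
      0 < Real.sqrt (p.1 ^ 2 + p.2 ^ 2) → Real.sqrt (p.1 ^ 2 + p.2 ^ 2) < δ →
      |ω p - ωD p| ≤ C * (p.1 ^ 2 + p.2 ^ 2) * ωD p) ∧
    (∀ ε > (0:ℝ), ∃ δ > (0:ℝ), ∀ p : ℝ × ℝ,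
      0 < Real.sqrt (p.1 ^ 2 + p.2 ^ 2) → Real.sqrt (p.1 ^ 2 + p.2 ^ 2) < δ →
      |ω p / ωD p - 1| < ε) := by
  have hbound (p : ℝ × ℝ) (hp : √(p.1 ^ 2 + p.2 ^ 2) ≤ 1 / 4) :
      |ω p - ωD p| ≤ 8 * (p.1 ^ 2 + p.2 ^ 2) * ωD p := by
    rw [hω, hωD]; exact abs_arccos_sqrt_one_sub_sq_mul_cos_sub_sqrt_le hp
  refine ⟨⟨8, by norm_num, 1 / 4, by norm_num, fun p _ _ _ hp ↦ hbound p hp.le⟩, ?_⟩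
  intro ε hε
  refine ⟨min (1 / 4) √(ε / 8), lt_min (by norm_num) (sqrt_pos.mpr (by positivity)), ?_⟩
  intro p hpos hp
  have hsq : p.1 ^ 2 + p.2 ^ 2 < ε / 8 := by
    have := (lt_sqrt (sqrt_nonneg _)).mp (hp.trans_le (min_le_right _ _))
    rwa [sq_sqrt (by positivity)] at this
  calc |ω p / ωD p - 1| ≤ 8 * (p.1 ^ 2 + p.2 ^ 2) :=
        abs_div_sub_one_le (hωD p ▸ hpos) (hbound p (hp.trans_le (min_le_left _ _)).le)
    _ < ε := by linarith
end
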